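/- arXiv:2006.15606 — 2 statements merged into one kernel-verified Lean document; each statement's English description precedes it below -/
import Mathlib

section
/- Let Ω ⊆ ℝ⁵ be open and let G, H : Ω → ℝ be smooth. Let z₁ and z₂ be two smooth solutions of the PDE system z_y = G(x,y,z,z_x,z_xx), z_xxx = H(x,y,z,z_x,z_xx) on a connected open set V ⊆ ℝ², both with 2-jet maps taking values in Ω. If at some point (x₀,y₀) ∈ V one has z₁(x₀,y₀) = z₂(x₀,y₀), ∂z₁/∂x(x₀,y₀) = ∂z₂/∂x(x₀,y₀) and ∂²z₁/∂x²(x₀,y₀) = ∂²z₂/∂x²(x₀,y₀), then z₁ = z₂ on V. -/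
/-- Partial derivative of a function on `ℝ⁵` (coordinates `(x,y,z,p,r)` indexed `0,…,4`)
in the `i`-th coordinate direction. -/
noncomputable def pd (i : Fin 5) (F : (Fin 5 → ℝ) → ℝ) (v : Fin 5 → ℝ) : ℝ :=
  fderiv ℝ F v (Pi.single i 1)

/-- The total derivative operator `D F = F_x + p F_z + r F_p + H F_r`. -/
noncomputable def Dop (H : (Fin 5 → ℝ) → ℝ) (F : (Fin 5 → ℝ) → ℝ) (v : Fin 5 → ℝ) : ℝ :=
  pd 0 F v + v 3 * pd 2 F v + v 4 * pd 3 F v + H v * pd 4 F v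

/-- The operator `Δ F = F_y + G F_z + (DG) F_p + (D²G) F_r`. -/
noncomputable def Delta (G H : (Fin 5 → ℝ) → ℝ) (F : (Fin 5 → ℝ) → ℝ) (v : Fin 5 → ℝ) : ℝ :=
  pd 1 F v + G v * pd 2 F v + Dop H G v * pd 3 F v + Dop H (Dop H G) v * pd 4 F v

/-- `z_x`. -/
noncomputable def zx (z : ℝ → ℝ → ℝ) (x y : ℝ) : ℝ := deriv (fun t => z t y) x
/-- `z_xx`. -/
noncomputable def zxx (z : ℝ → ℝ → ℝ) (x y : ℝ) : ℝ := deriv (fun t => zx z t y) x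
/-- `z_xxx`. -/
noncomputable def zxxx (z : ℝ → ℝ → ℝ) (x y : ℝ) : ℝ := deriv (fun t => zxx z t y) x
/-- `z_y`. -/
noncomputable def zy (z : ℝ → ℝ → ℝ) (x y : ℝ) : ℝ := deriv (fun s => z x s) y

/-- The 2-jet map `j(x,y) = (x, y, z(x,y), z_x(x,y), z_xx(x,y))`. -/
noncomputable def jet (z : ℝ → ℝ → ℝ) (q : ℝ × ℝ) : Fin 5 → ℝ :=
  ![q.1, q.2, z q.1 q.2, zx z q.1 q.2, zxx z q.1 q.2]

/-- `z` is a smooth solution of the PDE system `z_y = G∘j`, `z_xxx = H∘j` on `U`,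
with 2-jet map taking values in `Ω`. -/
def IsSolution (Ω : Set (Fin 5 → ℝ)) (G H : (Fin 5 → ℝ) → ℝ)
    (U : Set (ℝ × ℝ)) (z : ℝ → ℝ → ℝ) : Prop :=
  ContDiffOn ℝ (⊤ : ℕ∞) (fun q : ℝ × ℝ => z q.1 q.2) U ∧
  (∀ q ∈ U, jet z q ∈ Ω) ∧
  (∀ q ∈ U, zy z q.1 q.2 = G (jet z q)) ∧
  (∀ q ∈ U, zxxx z q.1 q.2 = H (jet z q))

/-!
The 2-jet `J = jet z` of a solution solves the total differential system `J_x = X ∘ J`,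
`J_y = Y ∘ J` for the vector fields `X = fieldD H` and `Y = fieldDelta G H` on `ℝ⁵`. The
`x`-equation is the PDE `z_xxx = H ∘ J`. For the `y`-equation, `D` is differentiation along `X`,
so `∂_x (Φ ∘ J) = (D Φ) ∘ J`; commuting mixed partials turns `z_y = G ∘ J` into
`∂_y z_x = (D G) ∘ J` and then `∂_y z_xx = (D² G) ∘ J`.

Both fields are `C¹`, so ODE uniqueness, first along a vertical segment and then along horizontal
ones, shows that two solutions of the system agreeing at a point agree on a rectangle around it.
Hence the set of points near which the two jets agree is open, closed in `V` and nonempty, so it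
is all of `V`.
-/

open Set Filter Topology
open scoped ContDiff

section PlanePartials

variable {E F : Type*} [NormedAddCommGroup E] [NormedSpace ℝ E]
  [NormedAddCommGroup F] [NormedSpace ℝ F]

noncomputable def partialX (φ : ℝ × ℝ → E) (q : ℝ × ℝ) : E := fderiv ℝ φ q (1, 0)

noncomputable def partialY (φ : ℝ × ℝ → E) (q : ℝ × ℝ) : E := fderiv ℝ φ q (0, 1)

variable {φ ψ : ℝ × ℝ → E} {q : ℝ × ℝ} {U : Set (ℝ × ℝ)}

lemma tendsto_sliceX (q : ℝ × ℝ) : Tendsto (fun t => (t, q.2)) (𝓝 q.1) (𝓝 q) :=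
  (continuous_id.prodMk continuous_const).tendsto q.1

lemma tendsto_sliceY (q : ℝ × ℝ) : Tendsto (fun s => (q.1, s)) (𝓝 q.2) (𝓝 q) :=
  (continuous_const.prodMk continuous_id).tendsto q.2

lemma DifferentiableAt.hasDerivAt_partialX (hφ : DifferentiableAt ℝ φ q) :
    HasDerivAt (fun t => φ (t, q.2)) (partialX φ q) q.1 :=
  hφ.hasFDerivAt.comp_hasDerivAt q.1 ((hasDerivAt_id q.1).prodMk (hasDerivAt_const _ _))

lemma DifferentiableAt.hasDerivAt_partialY (hφ : DifferentiableAt ℝ φ q) :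
    HasDerivAt (fun s => φ (q.1, s)) (partialY φ q) q.2 :=
  hφ.hasFDerivAt.comp_hasDerivAt q.2 ((hasDerivAt_const _ _).prodMk (hasDerivAt_id q.2))

lemma ContDiffOn.hasDerivAt_partialX (hφ : ContDiffOn ℝ ∞ φ U) (hU : IsOpen U) (hq : q ∈ U) :
    HasDerivAt (fun t => φ (t, q.2)) (partialX φ q) q.1 :=
  ((hφ.differentiableOn (by simp)).differentiableAt (hU.mem_nhds hq)).hasDerivAt_partialX

lemma ContDiffOn.hasDerivAt_partialY (hφ : ContDiffOn ℝ ∞ φ U) (hU : IsOpen U) (hq : q ∈ U) :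
    HasDerivAt (fun s => φ (q.1, s)) (partialY φ q) q.2 :=
  ((hφ.differentiableOn (by simp)).differentiableAt (hU.mem_nhds hq)).hasDerivAt_partialY

lemma deriv_eq_partialX_of_eqOn {g : ℝ → ℝ → E} (hU : IsOpen U)
    (hφ : DifferentiableOn ℝ φ U) (h : EqOn (fun p => g p.1 p.2) φ U) (hq : q ∈ U) :
    deriv (fun t => g t q.2) q.1 = partialX φ q :=
  ((hφ.differentiableAt (hU.mem_nhds hq)).hasDerivAt_partialX.congr_of_eventuallyEq
    ((eventuallyEq_of_mem (hU.mem_nhds hq) h).comp_tendsto (tendsto_sliceX q))).deriv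

lemma deriv_eq_partialY_of_eqOn {g : ℝ → ℝ → E} (hU : IsOpen U)
    (hφ : DifferentiableOn ℝ φ U) (h : EqOn (fun p => g p.1 p.2) φ U) (hq : q ∈ U) :
    deriv (fun s => g q.1 s) q.2 = partialY φ q :=
  ((hφ.differentiableAt (hU.mem_nhds hq)).hasDerivAt_partialY.congr_of_eventuallyEq
    ((eventuallyEq_of_mem (hU.mem_nhds hq) h).comp_tendsto (tendsto_sliceY q))).deriv

lemma partialX_eq_fderiv_of_eventuallyEq_comp {J : ℝ × ℝ → F} {Φ : F → E} {v : F}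
    (hJ : HasDerivAt (fun t => J (t, q.2)) v q.1) (hΦ : DifferentiableAt ℝ Φ (J q))
    (hψ : DifferentiableAt ℝ ψ q) (h : ψ =ᶠ[𝓝 q] Φ ∘ J) :
    partialX ψ q = fderiv ℝ Φ (J q) v :=
  hψ.hasDerivAt_partialX.unique
    ((hΦ.hasFDerivAt.comp_hasDerivAt q.1 hJ).congr_of_eventuallyEq
      (h.comp_tendsto (tendsto_sliceX q)))

lemma ContDiffOn.partialX (hφ : ContDiffOn ℝ ∞ φ U) (hU : IsOpen U) :
    ContDiffOn ℝ ∞ (partialX φ) U :=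
  (hφ.fderiv_of_isOpen hU le_rfl).clm_apply contDiffOn_const

lemma ContDiffOn.partialY (hφ : ContDiffOn ℝ ∞ φ U) (hU : IsOpen U) :
    ContDiffOn ℝ ∞ (partialY φ) U :=
  (hφ.fderiv_of_isOpen hU le_rfl).clm_apply contDiffOn_const

lemma fderiv_apply_comm {f : F → E} {x : F} (hf : ContDiffAt ℝ 2 f x) (v w : F) :
    fderiv ℝ (fun y => fderiv ℝ f y v) x w = fderiv ℝ (fun y => fderiv ℝ f y w) x v := by
  have hd : DifferentiableAt ℝ (fderiv ℝ f) x :=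
    (hf.fderiv_right (m := 1) (by norm_num)).differentiableAt one_ne_zero
  rw [fderiv_clm_apply hd (differentiableAt_const v),
    fderiv_clm_apply hd (differentiableAt_const w)]
  simpa using hf.isSymmSndFDerivAt (by simp) w v

lemma partialX_partialY_comm (hφ : ContDiffAt ℝ 2 φ q) :
    partialX (partialY φ) q = partialY (partialX φ) q :=
  fderiv_apply_comm hφ (0, 1) (1, 0)

end PlanePartials

section TotalDifferentialSystem

variable {E : Type*} [NormedAddCommGroup E] [NormedSpace ℝ E]

def SolvesSystemOn (A B : E → E) (J : ℝ × ℝ → E) (U : Set (ℝ × ℝ)) : Prop :=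
  ∀ p ∈ U, HasDerivAt (fun t => J (t, p.2)) (A (J p)) p.1 ∧
    HasDerivAt (fun s => J (p.1, s)) (B (J p)) p.2

variable {A B : E → E} {J₁ J₂ : ℝ × ℝ → E} {q : ℝ × ℝ}

lemma SolvesSystemOn.eqOn_rectangle {s : Set E} {K K' : NNReal} {a b c d : ℝ}
    (hA : LipschitzOnWith K A s) (hB : LipschitzOnWith K' B s)
    (h₁ : SolvesSystemOn A B J₁ (Ioo a b ×ˢ Ioo c d))
    (h₂ : SolvesSystemOn A B J₂ (Ioo a b ×ˢ Ioo c d))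
    (hs₁ : MapsTo J₁ (Ioo a b ×ˢ Ioo c d) s) (hs₂ : MapsTo J₂ (Ioo a b ×ˢ Ioo c d) s)
    (hq : q ∈ Ioo a b ×ˢ Ioo c d) (heq : J₁ q = J₂ q) :
    EqOn J₁ J₂ (Ioo a b ×ˢ Ioo c d) := by
  rintro ⟨x, y⟩ ⟨hx, hy⟩
  have hvertical : EqOn (fun s => J₁ (q.1, s)) (fun s => J₂ (q.1, s)) (Ioo c d) :=
    ODE_solution_unique_of_mem_Ioo (v := fun _ => B) (s := fun _ => s) (fun _ _ => hB) hq.2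
      (fun t ht => ⟨(h₁ (q.1, t) ⟨hq.1, ht⟩).2, hs₁ ⟨hq.1, ht⟩⟩)
      (fun t ht => ⟨(h₂ (q.1, t) ⟨hq.1, ht⟩).2, hs₂ ⟨hq.1, ht⟩⟩) heq
  exact ODE_solution_unique_of_mem_Ioo (v := fun _ => A) (s := fun _ => s)
    (f := fun t => J₁ (t, y)) (g := fun t => J₂ (t, y)) (fun _ _ => hA) hq.1
    (fun t ht => ⟨(h₁ (t, y) ⟨ht, hy⟩).1, hs₁ ⟨ht, hy⟩⟩)
    (fun t ht => ⟨(h₂ (t, y) ⟨ht, hy⟩).1, hs₂ ⟨ht, hy⟩⟩) (hvertical hy) hx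

lemma SolvesSystemOn.eventuallyEq {U : Set (ℝ × ℝ)} (hU : IsOpen U)
    (h₁ : SolvesSystemOn A B J₁ U) (h₂ : SolvesSystemOn A B J₂ U) (hq : q ∈ U)
    (hc₁ : ContinuousAt J₁ q) (hc₂ : ContinuousAt J₂ q)
    (hA : ContDiffAt ℝ 1 A (J₁ q)) (hB : ContDiffAt ℝ 1 B (J₁ q)) (heq : J₁ q = J₂ q) :
    J₁ =ᶠ[𝓝 q] J₂ := by
  obtain ⟨K, sA, hsA, hKA⟩ := hA.exists_lipschitzOnWith
  obtain ⟨K', sB, hsB, hKB⟩ := hB.exists_lipschitzOnWith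
  have hs : sA ∩ sB ∈ 𝓝 (J₁ q) := inter_mem hsA hsB
  obtain ⟨ε, hε, hball⟩ := Metric.mem_nhds_iff.1 <|
    inter_mem (inter_mem (hU.mem_nhds hq) (hc₁ hs)) (hc₂ (heq ▸ hs))
  have hrect : Metric.ball q ε = Ioo (q.1 - ε) (q.1 + ε) ×ˢ Ioo (q.2 - ε) (q.2 + ε) := by
    rw [← Real.ball_eq_Ioo, ← Real.ball_eq_Ioo, ball_prod_same]
  rw [hrect] at hball
  refine eventuallyEq_of_mem (hrect ▸ Metric.ball_mem_nhds q hε) ?_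
  exact SolvesSystemOn.eqOn_rectangle (hKA.mono inter_subset_left) (hKB.mono inter_subset_right)
    (fun p hp => h₁ p (hball hp).1.1) (fun p hp => h₂ p (hball hp).1.1)
    (fun p hp => (hball hp).1.2) (fun p hp => (hball hp).2)
    (hrect ▸ Metric.mem_ball_self hε) heq

lemma SolvesSystemOn.eqOn_of_isPreconnected {U : Set (ℝ × ℝ)} (hU : IsOpen U)
    (hU' : IsPreconnected U) (h₁ : SolvesSystemOn A B J₁ U) (h₂ : SolvesSystemOn A B J₂ U)
    (hc₁ : ContinuousOn J₁ U) (hc₂ : ContinuousOn J₂ U)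
    (hA : ∀ q ∈ U, ContDiffAt ℝ 1 A (J₁ q)) (hB : ∀ q ∈ U, ContDiffAt ℝ 1 B (J₁ q))
    {q₀ : ℝ × ℝ} (hq₀ : q₀ ∈ U) (heq : J₁ q₀ = J₂ q₀) :
    EqOn J₁ J₂ U := by
  have hlocal : ∀ q ∈ U, J₁ q = J₂ q → J₁ =ᶠ[𝓝 q] J₂ := fun q hq =>
    h₁.eventuallyEq hU h₂ hq (hc₁.continuousAt (hU.mem_nhds hq))
      (hc₂.continuousAt (hU.mem_nhds hq)) (hA q hq) (hB q hq)
  suffices U ⊆ {q | J₁ =ᶠ[𝓝 q] J₂} from fun q hq => (this hq).eq_of_nhds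
  refine hU'.subset_of_closure_inter_subset isOpen_setOfPred_eventually_nhds
    ⟨q₀, hq₀, hlocal q₀ hq₀ heq⟩ ?_
  rintro q ⟨hq_cl, hq⟩
  refine hlocal q hq (by_contra fun hne => ?_)
  have hne' : ∀ᶠ p in 𝓝 q, J₁ p ≠ J₂ p :=
    ((hc₁.continuousAt (hU.mem_nhds hq)).sub (hc₂.continuousAt (hU.mem_nhds hq))).eventually_ne
      (sub_ne_zero.2 hne) |>.mono fun p hp => sub_ne_zero.1 hp
  obtain ⟨p, hp_ne, hp_eq⟩ := mem_closure_iff_nhds.1 hq_cl _ hne'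
  exact hp_ne hp_eq.eq_of_nhds

end TotalDifferentialSystem

section JetFields

variable {Ω : Set (Fin 5 → ℝ)} {G H F : (Fin 5 → ℝ) → ℝ}

noncomputable def fieldD (H : (Fin 5 → ℝ) → ℝ) (v : Fin 5 → ℝ) : Fin 5 → ℝ :=
  ![1, 0, v 3, v 4, H v]

noncomputable def fieldDelta (G H : (Fin 5 → ℝ) → ℝ) (v : Fin 5 → ℝ) : Fin 5 → ℝ :=
  ![0, 1, G v, Dop H G v, Dop H (Dop H G) v]

lemma Dop_eq_fderiv_fieldD (H F : (Fin 5 → ℝ) → ℝ) (v : Fin 5 → ℝ) :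
    Dop H F v = fderiv ℝ F v (fieldD H v) := by
  have hfield : fieldD H v = Pi.single 0 1 + v 3 • Pi.single 2 1 + v 4 • Pi.single 3 1
      + H v • Pi.single 4 1 := by
    ext i; fin_cases i <;> simp [fieldD]
  rw [hfield]
  simp only [map_add, map_smul, smul_eq_mul, Dop, pd]

lemma contDiffOn_fieldD (hH : ContDiffOn ℝ ∞ H Ω) : ContDiffOn ℝ ∞ (fieldD H) Ω := by
  refine contDiffOn_pi.2 fun i => ?_
  fin_cases i
  exacts [contDiffOn_const, contDiffOn_const, (contDiff_apply ℝ ℝ 3).contDiffOn,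
    (contDiff_apply ℝ ℝ 4).contDiffOn, hH]

lemma ContDiffOn.Dop (hH : ContDiffOn ℝ ∞ H Ω) (hF : ContDiffOn ℝ ∞ F Ω) (hΩ : IsOpen Ω) :
    ContDiffOn ℝ ∞ (Dop H F) Ω := by
  simp_rw [funext (Dop_eq_fderiv_fieldD H F)]
  exact (hF.fderiv_of_isOpen hΩ le_rfl).clm_apply (contDiffOn_fieldD hH)

lemma contDiffOn_fieldDelta (hG : ContDiffOn ℝ ∞ G Ω) (hH : ContDiffOn ℝ ∞ H Ω)
    (hΩ : IsOpen Ω) : ContDiffOn ℝ ∞ (fieldDelta G H) Ω := by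
  have hDG := hH.Dop hG hΩ
  refine contDiffOn_pi.2 fun i => ?_
  fin_cases i
  exacts [contDiffOn_const, contDiffOn_const, hG, hDG, hH.Dop hDG hΩ]

end JetFields

section Solutions

noncomputable def jetOf (f : ℝ × ℝ → ℝ) (q : ℝ × ℝ) : Fin 5 → ℝ :=
  ![q.1, q.2, f q, partialX f q, partialX (partialX f) q]

lemma ContDiffOn.jetOf {U : Set (ℝ × ℝ)} {f : ℝ × ℝ → ℝ} (hf : ContDiffOn ℝ ∞ f U)
    (hU : IsOpen U) : ContDiffOn ℝ ∞ (jetOf f) U := by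
  have h1 := hf.partialX hU
  refine contDiffOn_pi.2 fun i => ?_
  fin_cases i
  exacts [contDiffOn_fst, contDiffOn_snd, hf, h1, h1.partialX hU]

namespace IsSolution

variable {Ω : Set (Fin 5 → ℝ)} {G H : (Fin 5 → ℝ) → ℝ} {V : Set (ℝ × ℝ)} {z : ℝ → ℝ → ℝ}
  {q : ℝ × ℝ}

lemma zx_eqOn (hz : IsSolution Ω G H V z) (hV : IsOpen V) :
    EqOn (fun p => zx z p.1 p.2) (partialX (Function.uncurry z)) V := fun _ hq =>
  deriv_eq_partialX_of_eqOn hV (hz.1.differentiableOn (by simp)) (fun _ _ => rfl) hq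

lemma zxx_eqOn (hz : IsSolution Ω G H V z) (hV : IsOpen V) :
    EqOn (fun p => zxx z p.1 p.2) (partialX (partialX (Function.uncurry z))) V := fun _ hq =>
  deriv_eq_partialX_of_eqOn hV ((hz.1.partialX hV).differentiableOn (by simp))
    (hz.zx_eqOn hV) hq

lemma zxxx_eqOn (hz : IsSolution Ω G H V z) (hV : IsOpen V) :
    EqOn (fun p => zxxx z p.1 p.2) (partialX (partialX (partialX (Function.uncurry z)))) V :=
  fun _ hq => deriv_eq_partialX_of_eqOn hV
    (((hz.1.partialX hV).partialX hV).differentiableOn (by simp)) (hz.zxx_eqOn hV) hq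

lemma zy_eqOn (hz : IsSolution Ω G H V z) (hV : IsOpen V) :
    EqOn (fun p => zy z p.1 p.2) (partialY (Function.uncurry z)) V := fun _ hq =>
  deriv_eq_partialY_of_eqOn hV (hz.1.differentiableOn (by simp)) (fun _ _ => rfl) hq

lemma jet_eqOn (hz : IsSolution Ω G H V z) (hV : IsOpen V) :
    EqOn (jet z) (jetOf (Function.uncurry z)) V := fun q hq => by
  have h1 : zx z q.1 q.2 = _ := hz.zx_eqOn hV hq
  have h2 : zxx z q.1 q.2 = _ := hz.zxx_eqOn hV hq
  rw [jet, jetOf, h1, h2]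
  rfl

lemma continuousOn_jet (hz : IsSolution Ω G H V z) (hV : IsOpen V) :
    ContinuousOn (jet z) V :=
  (hz.1.jetOf hV).continuousOn.congr (hz.jet_eqOn hV)

lemma hasDerivAt_jet_x (hz : IsSolution Ω G H V z) (hV : IsOpen V) (hq : q ∈ V) :
    HasDerivAt (fun t => jet z (t, q.2)) (fieldD H (jet z q)) q.1 := by
  set f := Function.uncurry z
  have hf : ContDiffOn ℝ ∞ f V := hz.1
  have h1 := hf.partialX hV
  have h2 := h1.partialX hV
  have hfield : fieldD H (jet z q) =
      ![1, 0, partialX f q, partialX (partialX f) q, partialX (partialX (partialX f)) q] := by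
    have h3 : zxxx z q.1 q.2 = _ := hz.zxxx_eqOn hV hq
    rw [fieldD, ← hz.2.2.2 q hq, h3, hz.jet_eqOn hV hq]
    rfl
  rw [hfield]
  refine (hasDerivAt_pi.2 fun i => ?_).congr_of_eventuallyEq
    ((eventuallyEq_of_mem (hV.mem_nhds hq) (hz.jet_eqOn hV)).comp_tendsto (tendsto_sliceX q))
  fin_cases i
  exacts [hasDerivAt_id _, hasDerivAt_const _ _, hf.hasDerivAt_partialX hV hq,
    h1.hasDerivAt_partialX hV hq, h2.hasDerivAt_partialX hV hq]

lemma partialY_partialX_eq_Dop (hz : IsSolution Ω G H V z) (hV : IsOpen V) (hΩ : IsOpen Ω)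
    {φ : ℝ × ℝ → ℝ} {Φ : (Fin 5 → ℝ) → ℝ} (hφ : ContDiffOn ℝ ∞ φ V) (hΦ : ContDiffOn ℝ ∞ Φ Ω)
    (hy : EqOn (partialY φ) (Φ ∘ jet z) V) (hq : q ∈ V) :
    partialY (partialX φ) q = Dop H Φ (jet z q) := by
  have hφ2 : ContDiffAt ℝ 2 φ q :=
    (hφ.contDiffAt (hV.mem_nhds hq)).of_le (WithTop.coe_le_coe.2 le_top)
  rw [← partialX_partialY_comm hφ2, Dop_eq_fderiv_fieldD]
  exact partialX_eq_fderiv_of_eventuallyEq_comp (hz.hasDerivAt_jet_x hV hq)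
    ((hΦ.differentiableOn (by simp)).differentiableAt (hΩ.mem_nhds (hz.2.1 q hq)))
    (((hφ.partialY hV).differentiableOn (by simp)).differentiableAt (hV.mem_nhds hq))
    (eventuallyEq_of_mem (hV.mem_nhds hq) hy)

lemma hasDerivAt_jet_y (hz : IsSolution Ω G H V z) (hV : IsOpen V) (hΩ : IsOpen Ω)
    (hG : ContDiffOn ℝ ∞ G Ω) (hH : ContDiffOn ℝ ∞ H Ω) (hq : q ∈ V) :
    HasDerivAt (fun s => jet z (q.1, s)) (fieldDelta G H (jet z q)) q.2 := by
  set f := Function.uncurry z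
  have hf : ContDiffOn ℝ ∞ f V := hz.1
  have h1 := hf.partialX hV
  have hy0 : EqOn (partialY f) (G ∘ jet z) V := fun p hp =>
    (hz.zy_eqOn hV hp).symm.trans (hz.2.2.1 p hp)
  have hy1 : EqOn (partialY (partialX f)) (Dop H G ∘ jet z) V := fun _ hp =>
    hz.partialY_partialX_eq_Dop hV hΩ hf hG hy0 hp
  have hy2 : EqOn (partialY (partialX (partialX f))) (Dop H (Dop H G) ∘ jet z) V := fun _ hp =>
    hz.partialY_partialX_eq_Dop hV hΩ h1 (hH.Dop hG hΩ) hy1 hp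
  have hfield : fieldDelta G H (jet z q) =
      ![0, 1, partialY f q, partialY (partialX f) q, partialY (partialX (partialX f)) q] := by
    rw [hy0 hq, hy1 hq, hy2 hq]
    rfl
  rw [hfield]
  refine (hasDerivAt_pi.2 fun i => ?_).congr_of_eventuallyEq
    ((eventuallyEq_of_mem (hV.mem_nhds hq) (hz.jet_eqOn hV)).comp_tendsto (tendsto_sliceY q))
  fin_cases i
  exacts [hasDerivAt_const _ _, hasDerivAt_id _, hf.hasDerivAt_partialY hV hq,
    h1.hasDerivAt_partialY hV hq, (h1.partialX hV).hasDerivAt_partialY hV hq]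

lemma solvesSystemOn (hz : IsSolution Ω G H V z) (hV : IsOpen V) (hΩ : IsOpen Ω)
    (hG : ContDiffOn ℝ ∞ G Ω) (hH : ContDiffOn ℝ ∞ H Ω) :
    SolvesSystemOn (fieldD H) (fieldDelta G H) (jet z) V := fun _ hq =>
  ⟨hz.hasDerivAt_jet_x hV hq, hz.hasDerivAt_jet_y hV hΩ hG hH hq⟩

end IsSolution

end Solutions

/-- Two smooth solutions of the PDE system on a connected open set whose
2-jets agree at one point coincide: the general solution depends on exactly three constants. -/
theorem uniqueness_of_solutions
    (Ω : Set (Fin 5 → ℝ)) (hΩ : IsOpen Ω) (G H : (Fin 5 → ℝ) → ℝ)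
    (hG : ContDiffOn ℝ (⊤ : ℕ∞) G Ω) (hH : ContDiffOn ℝ (⊤ : ℕ∞) H Ω)
    (V : Set (ℝ × ℝ)) (hV : IsOpen V) (hVconn : IsConnected V)
    (z₁ z₂ : ℝ → ℝ → ℝ)
    (hz₁ : IsSolution Ω G H V z₁) (hz₂ : IsSolution Ω G H V z₂)
    (q₀ : ℝ × ℝ) (hq₀ : q₀ ∈ V)
    (h0 : z₁ q₀.1 q₀.2 = z₂ q₀.1 q₀.2)
    (h1 : zx z₁ q₀.1 q₀.2 = zx z₂ q₀.1 q₀.2)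
    (h2 : zxx z₁ q₀.1 q₀.2 = zxx z₂ q₀.1 q₀.2) :
    ∀ q ∈ V, z₁ q.1 q.2 = z₂ q.1 q.2 := by
  have hC1 : ∀ {X : (Fin 5 → ℝ) → Fin 5 → ℝ}, ContDiffOn ℝ ∞ X Ω →
      ∀ q ∈ V, ContDiffAt ℝ 1 X (jet z₁ q) := fun hX q hq =>
    (hX.contDiffAt (hΩ.mem_nhds (hz₁.2.1 q hq))).of_le (WithTop.coe_le_coe.2 le_top)
  have hjet₀ : jet z₁ q₀ = jet z₂ q₀ := by simp [jet, h0, h1, h2]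
  have hjet : EqOn (jet z₁) (jet z₂) V :=
    (hz₁.solvesSystemOn hV hΩ hG hH).eqOn_of_isPreconnected hV hVconn.isPreconnected
      (hz₂.solvesSystemOn hV hΩ hG hH) (hz₁.continuousOn_jet hV) (hz₂.continuousOn_jet hV)
      (hC1 (contDiffOn_fieldD hH)) (hC1 (contDiffOn_fieldDelta hG hH hΩ)) hq₀ hjet₀
  exact fun q hq => congrFun (hjet hq) 2
end

section
/- Let f be a smooth real-valued function on an open interval I ⊆ ℝ with f'' nowhere vanishing. A three-times continuously differentiable function Y : I → ℝ satisfies the third-order ODE Y'''(X) · f''(X) = Y''(X) · f'''(X) for all X ∈ I if and only if there exist real constants c₁, c₂, c₃ such that Y(X) = c₁ f(X) + c₂ X + c₃ for all X ∈ I. -/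
/-!
The ODE says that the Wronskian of `Y''` and `f''` vanishes, so `Y''/f''` has zero derivative
and `Y'' = c₁ f''` on the interval. Then `(Y - c₁ f)'' = 0`, so `Y - c₁ f` is affine.
Conversely, the affine part is killed by two derivatives.
-/

section

variable {𝕜 : Type*} [RCLike 𝕜] {F : Type*} [NormedAddCommGroup F] [NormedSpace 𝕜 F]
  {s : Set 𝕜}

theorem ContDiffOn.differentiableOn_iteratedDeriv_of_isOpen {n : WithTop ℕ∞} {m : ℕ}
    {f : 𝕜 → F} (hf : ContDiffOn 𝕜 n f s) (hmn : m < n) (hs : IsOpen s) :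
    DifferentiableOn 𝕜 (iteratedDeriv m f) s :=
  (hf.differentiableOn_iteratedDerivWithin hmn hs.uniqueDiffOn).congr
    fun _ hx => (iteratedDerivWithin_of_isOpen hs hx).symm

theorem IsOpen.exists_eq_const_mul_of_deriv_mul_eq {u v : 𝕜 → 𝕜} (hs : IsOpen s)
    (hs' : IsPreconnected s) (hu : DifferentiableOn 𝕜 u s) (hv : DifferentiableOn 𝕜 v s)
    (hv₀ : ∀ x ∈ s, v x ≠ 0) (huv : ∀ x ∈ s, deriv u x * v x = u x * deriv v x) :
    ∃ c, ∀ x ∈ s, u x = c * v x := by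
  have hderiv : ∀ x ∈ s, HasDerivAt (fun x => u x / v x) 0 x := fun x hx => by
    have hx' := hs.mem_nhds hx
    have h := (hu.differentiableAt hx').hasDerivAt.div (hv.differentiableAt hx').hasDerivAt
      (hv₀ x hx)
    rwa [huv x hx, sub_self, zero_div] at h
  obtain ⟨c, hc⟩ := hs.exists_is_const_of_deriv_eq_zero hs'
    (fun x hx => (hderiv x hx).differentiableAt.differentiableWithinAt)
    (fun x hx => (hderiv x hx).deriv)
  exact ⟨c, fun x hx => by rw [← hc x hx, div_mul_cancel₀ _ (hv₀ x hx)]⟩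

theorem IsOpen.exists_eq_affine_of_iteratedDeriv_two_eq_zero {g : 𝕜 → F} (hs : IsOpen s)
    (hs' : IsPreconnected s) (hg : ContDiffOn 𝕜 2 g s)
    (hg₂ : ∀ x ∈ s, iteratedDeriv 2 g x = 0) : ∃ a b, ∀ x ∈ s, g x = x • a + b := by
  have hg₁ : DifferentiableOn 𝕜 g s :=
    (hg.differentiableOn_iteratedDeriv_of_isOpen (m := 0) (by norm_num) hs).congr (by simp)
  obtain ⟨a, ha⟩ := hs.exists_is_const_of_deriv_eq_zero hs'
    (by simpa using hg.differentiableOn_iteratedDeriv_of_isOpen (m := 1) (by norm_num) hs)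
    (fun x hx => by simpa [iteratedDeriv_succ] using hg₂ x hx)
  obtain ⟨b, hb⟩ := hs.exists_eq_add_of_deriv_eq hs' hg₁
    (differentiable_id.smul_const a).differentiableOn
    fun x hx => by rw [((hasDerivAt_id x).smul_const a).deriv, one_smul, ha x hx]
  exact ⟨a, b, hb⟩

theorem iteratedDeriv_const_mul_add_affine {f : 𝕜 → 𝕜} {n : ℕ} {x : 𝕜} (hn : 2 ≤ n)
    (hf : ContDiffAt 𝕜 n f x) (c₁ c₂ c₃ : 𝕜) :
    iteratedDeriv n (fun t => c₁ * f t + c₂ * t + c₃) x = c₁ * iteratedDeriv n f x := by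
  rw [iteratedDeriv_fun_add (by fun_prop) (by fun_prop),
    iteratedDeriv_fun_add (by fun_prop) (by fun_prop), iteratedDeriv_const_mul_field,
    iteratedDeriv_const_mul_field, iteratedDeriv_fun_id, iteratedDeriv_const]
  simp [show n ≠ 0 by omega, show n ≠ 1 by omega]

end

/-- For `f` smooth with nowhere vanishing `f''` on an open interval `I`,
a `C³` function `Y` solves `Y''' f'' = Y'' f'''` on `I` if and only if
`Y = c₁ f + c₂ X + c₃` for some real constants `c₁, c₂, c₃`. -/
theorem ODE_solutions_are_affine_in_f
    (I : Set ℝ) (hI : IsOpen I) (hI' : Convex ℝ I)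
    (f : ℝ → ℝ) (hf : ContDiffOn ℝ (⊤ : ℕ∞) f I)
    (hnd : ∀ x ∈ I, iteratedDeriv 2 f x ≠ 0)
    (Y : ℝ → ℝ) (hY : ContDiffOn ℝ 3 Y I) :
    (∀ X ∈ I, iteratedDeriv 3 Y X * iteratedDeriv 2 f X
        = iteratedDeriv 2 Y X * iteratedDeriv 3 f X) ↔
    (∃ c₁ c₂ c₃ : ℝ, ∀ X ∈ I, Y X = c₁ * f X + c₂ * X + c₃) := by
  have hf₃ : ContDiffOn ℝ 3 f I := hf.of_le (WithTop.coe_le_coe.mpr le_top)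
  constructor
  · intro hode
    obtain ⟨c₁, hc₁⟩ := hI.exists_eq_const_mul_of_deriv_mul_eq hI'.isPreconnected
      (hY.differentiableOn_iteratedDeriv_of_isOpen (m := 2) (by norm_num) hI)
      (hf₃.differentiableOn_iteratedDeriv_of_isOpen (m := 2) (by norm_num) hI) hnd
      (by simpa only [← iteratedDeriv_succ] using hode)
    have hdiff_two : ∀ x ∈ I, iteratedDeriv 2 (fun t => Y t - c₁ * f t) x = 0 := by
      intro x hx
      have hx' := hI.mem_nhds hx
      rw [iteratedDeriv_fun_sub ((hY.of_le (by norm_num)).contDiffAt hx')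
          (contDiffAt_const.mul ((hf₃.of_le (by norm_num)).contDiffAt hx')),
        iteratedDeriv_const_mul_field, hc₁ x hx, sub_self]
    have hdiff : ContDiffOn ℝ 2 (fun t => Y t - c₁ * f t) I :=
      (hY.sub (contDiffOn_const.mul hf₃)).of_le (by norm_num)
    obtain ⟨c₂, c₃, hc⟩ :=
      hI.exists_eq_affine_of_iteratedDeriv_two_eq_zero hI'.isPreconnected hdiff hdiff_two
    exact ⟨c₁, c₂, c₃, fun X hX => by linear_combination hc X hX⟩
  · rintro ⟨c₁, c₂, c₃, hc⟩ X hX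
    have hfX : ContDiffAt ℝ 3 f X := hf₃.contDiffAt (hI.mem_nhds hX)
    rw [Set.EqOn.iteratedDeriv_of_isOpen hc hI 3 hX, Set.EqOn.iteratedDeriv_of_isOpen hc hI 2 hX,
      iteratedDeriv_const_mul_add_affine le_rfl (hfX.of_le (by norm_num)),
      iteratedDeriv_const_mul_add_affine (by norm_num) hfX]
    ring
end
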